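/- arXiv:1501.02066 — 3 statements merged into one kernel-verified Lean document; each statement's English description precedes it below -/
import Mathlib

section
/- Let (R, m, k) be a commutative noetherian local ring, I an injective R-module, and 0 → M → F → C → 0 an exact sequence of R-modules such that the induced sequence 0 → Hom_R(C, F') → Hom_R(F, F') → Hom_R(M, F') → 0 is exact for every flat R-module F'. Then the sequence 0 → M ⊗_R I → F ⊗_R I → C ⊗_R I → 0 is exact. -/
/-!
The hypothesis, applied to the flat module `F' = I⋆ = Hom_ℤ(I, ℚ/ℤ)`, makes
`Hom(F, I⋆) → Hom(M, I⋆)` surjective; by tensor-hom adjunction this is the dual of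
`M ⊗ I → F ⊗ I`, which is therefore injective. The rest of the sequence is right exactness of
`- ⊗ I`.

`I⋆` is flat because, for finitely presented `N`, the evaluation map
`N ⊗ I⋆ → Hom_R(N, I)⋆` is an isomorphism (true for finite free `N`, then by the five lemma
applied to a presentation). For an ideal `J` of the noetherian ring `R`, the injectivity of
`J ⊗ I⋆ → R ⊗ I⋆` thus becomes that of the dual of the restriction `Hom(R, I) → Hom(J, I)`,
which is surjective since `I` is injective.
-/

open TensorProduct

universe u v

namespace CharacterModule

variable {R : Type*} [CommRing R]

lemma exact_dual {A B C : Type*} [AddCommGroup A] [AddCommGroup B] [AddCommGroup C]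
    [Module R A] [Module R B] [Module R C] {f : A →ₗ[R] B} {g : B →ₗ[R] C}
    (hfg : Function.Exact f g) : Function.Exact (dual g) (dual f) := by
  refine Function.Exact.of_comp_of_mem_range ?_ fun c hc ↦ ?_
  · ext c a
    exact congr(c $(hfg.apply_apply_eq_zero a)).trans c.map_zero
  -- `c` descends to `B ⧸ range f`, which embeds into `C`; then extend along that embedding.
  let c₀ : CharacterModule (B ⧸ LinearMap.range f) :=
    QuotientAddGroup.lift (LinearMap.range f).toAddSubgroup c
      (by rintro _ ⟨a, rfl⟩; exact DFunLike.congr_fun hc a)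
  obtain ⟨c', hc'⟩ := dual_surjective_of_injective _
    (LinearMap.injective_range_liftQ_of_exact hfg) c₀
  exact ⟨c', by ext b; exact DFunLike.congr_fun hc' (Submodule.Quotient.mk b)⟩

variable {I : Type*} [AddCommGroup I] [Module R I]

variable (R I) in
noncomputable def tensorDualHom (N : Type*) [AddCommGroup N] [Module R N] :
    N ⊗[R] CharacterModule I →ₗ[R] CharacterModule (N →ₗ[R] I) :=
  TensorProduct.lift <| LinearMap.mk₂ R (fun n χ ↦ dual (LinearMap.applyₗ (R := R) n) χ)
    (fun n n' χ ↦ by ext f; exact congr(χ $(map_add f n n')).trans (map_add χ _ _))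
    (fun r n χ ↦ by ext f; exact congr(χ $(map_smul f r n)))
    (fun _ _ _ ↦ map_add _ _ _) (fun _ _ _ ↦ map_smul _ _ _)

variable {N N' : Type*} [AddCommGroup N] [Module R N] [AddCommGroup N'] [Module R N']

@[simp] lemma tensorDualHom_tmul (n : N) (χ : CharacterModule I) (f : N →ₗ[R] I) :
    tensorDualHom R I N (n ⊗ₜ χ) f = χ (f n) := rfl

lemma tensorDualHom_comp_rTensor (g : N →ₗ[R] N') :
    tensorDualHom R I N' ∘ₗ g.rTensor _ = dual (g.lcomp R I) ∘ₗ tensorDualHom R I N :=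
  TensorProduct.ext' fun _ _ ↦ rfl

section basis

variable {ι : Type*} [Fintype ι] (b : Module.Basis ι R N)

noncomputable def tensorDualHomInv :
    CharacterModule (N →ₗ[R] I) →ₗ[R] N ⊗[R] CharacterModule I :=
  ∑ j, TensorProduct.mk R N _ (b j) ∘ₗ dual (LinearMap.smulRightₗ (b.coord j))

lemma tensorDualHomInv_apply (c : CharacterModule (N →ₗ[R] I)) :
    tensorDualHomInv b c = ∑ j, b j ⊗ₜ dual (LinearMap.smulRightₗ (b.coord j)) c :=
  LinearMap.sum_apply _ _ _

lemma tensorDualHom_tensorDualHomInv (c : CharacterModule (N →ₗ[R] I)) :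
    tensorDualHom R I N (tensorDualHomInv b c) = c := by
  ext f
  have hf : ∑ j, (b.coord j).smulRight (f (b j)) = f := b.ext fun i ↦ by
    classical simp [Finsupp.single_apply]
  rw [tensorDualHomInv_apply, map_sum]
  exact (AddMonoidHom.finsetSum_apply _ _ _).trans <| (map_sum c _ _).symm.trans congr(c $hf)

lemma tensorDualHomInv_tensorDualHom (x : N ⊗[R] CharacterModule I) :
    tensorDualHomInv b (tensorDualHom R I N x) = x := by
  suffices tensorDualHomInv b ∘ₗ tensorDualHom R I N = LinearMap.id from congr($this x)
  refine TensorProduct.ext' fun n χ ↦ ?_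
  have hcoord (j : ι) :
      dual (LinearMap.smulRightₗ (b.coord j)) (tensorDualHom R I N (n ⊗ₜ χ)) = b.coord j n • χ :=
    rfl
  simp only [LinearMap.comp_apply, LinearMap.id_apply, tensorDualHomInv_apply, hcoord,
    ← smul_tmul, ← sum_tmul, Module.Basis.coord_apply, b.sum_repr]

end basis

lemma tensorDualHom_bijective_of_free [Module.Free R N] [Module.Finite R N] :
    Function.Bijective (tensorDualHom R I N) :=
  let b := Module.Free.chooseBasis R N
  ⟨Function.LeftInverse.injective (tensorDualHomInv_tensorDualHom b),
    Function.RightInverse.surjective (tensorDualHom_tensorDualHomInv b)⟩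

lemma tensorDualHom_bijective_of_finitePresentation [Module.FinitePresentation R N] :
    Function.Bijective (tensorDualHom R I N) := by
  obtain ⟨n, m, π, d, hπ, hd⟩ := Module.FinitePresentation.exists_fin' R N
  exact LinearMap.bijective_of_surjective_of_bijective_of_right_exact
    (d.rTensor _) (π.rTensor _) (dual (d.lcomp R I)) (dual (π.lcomp R I))
    (tensorDualHom R I _) (tensorDualHom R I _) (tensorDualHom R I N)
    (tensorDualHom_comp_rTensor d).symm (tensorDualHom_comp_rTensor π).symm
    (rTensor_exact _ hd hπ) (exact_dual (LinearMap.exact_lcomp_of_exact_of_surjective I hd hπ))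
    tensorDualHom_bijective_of_free.2 tensorDualHom_bijective_of_free
    (LinearMap.rTensor_surjective _ hπ)
    (dual_surjective_of_injective _ (LinearMap.lcomp_injective_of_surjective π hπ))

end CharacterModule

open CharacterModule in
theorem Module.Flat.characterModule_of_injective {R : Type u} [CommRing R] [IsNoetherianRing R]
    {I : Type v} [AddCommGroup I] [Module R I] [Small.{v} R] [Module.Injective R I] :
    Module.Flat R (CharacterModule I) := by
  refine Module.Flat.iff_rTensor_injective'.mpr fun J ↦ ?_
  have hrestrict : Function.Surjective (J.subtype.lcomp R I) :=
    Module.Baer.iff_surjective.mp (Module.Baer.of_injective ‹_›) J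
  have : Module.FinitePresentation R J := Module.finitePresentation_of_finite R J
  have hcomp : Function.Injective (dual (J.subtype.lcomp R I) ∘ₗ tensorDualHom R I J) :=
    (dual_injective_of_surjective _ hrestrict).comp tensorDualHom_bijective_of_finitePresentation.1
  rw [← tensorDualHom_comp_rTensor, LinearMap.coe_comp] at hcomp
  exact hcomp.of_comp

theorem tensor_injective_exact_general (R : Type) [CommRing R] [IsNoetherianRing R]
    (I : Type) [AddCommGroup I] [Module R I] (hI : Module.Injective R I)
    (M F C : Type) [AddCommGroup M] [Module R M] [AddCommGroup F] [Module R F]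
    [AddCommGroup C] [Module R C]
    (i : M →ₗ[R] F) (p : F →ₗ[R] C)
    (he : Function.Exact i p) (hp : Function.Surjective p)
    (hhom : ∀ (F' : Type) [AddCommGroup F'] [Module R F'], Module.Flat R F' →
      Function.Injective (LinearMap.lcomp R F' p) ∧
      Function.Exact (LinearMap.lcomp R F' p) (LinearMap.lcomp R F' i) ∧
      Function.Surjective (LinearMap.lcomp R F' i)) :
    Function.Injective (LinearMap.rTensor I i) ∧
      Function.Exact (LinearMap.rTensor I i) (LinearMap.rTensor I p) ∧
      Function.Surjective (LinearMap.rTensor I p) := by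
  obtain ⟨-, -, hsurj⟩ := hhom (CharacterModule I) Module.Flat.characterModule_of_injective
  exact ⟨rTensor_injective_iff_lcomp_surjective.mpr hsurj, rTensor_exact I he hp,
    LinearMap.rTensor_surjective I hp⟩

/-- If `0 → M → F → C → 0` is exact and `0 → Hom(C,F') → Hom(F,F') → Hom(M,F') → 0`
is exact for every flat module `F'`, then `0 → M ⊗ I → F ⊗ I → C ⊗ I → 0` is exact
for every injective module `I` over a commutative noetherian local ring. -/
theorem tensor_injective_exact (R : Type) [CommRing R] [IsNoetherianRing R] [IsLocalRing R]
    (I : Type) [AddCommGroup I] [Module R I] (hI : Module.Injective R I)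
    (M F C : Type) [AddCommGroup M] [Module R M] [AddCommGroup F] [Module R F]
    [AddCommGroup C] [Module R C]
    (i : M →ₗ[R] F) (p : F →ₗ[R] C)
    (hi : Function.Injective i) (he : Function.Exact i p) (hp : Function.Surjective p)
    (hhom : ∀ (F' : Type) [AddCommGroup F'] [Module R F'], Module.Flat R F' →
      Function.Injective (LinearMap.lcomp R F' p) ∧
      Function.Exact (LinearMap.lcomp R F' p) (LinearMap.lcomp R F' i) ∧
      Function.Surjective (LinearMap.lcomp R F' i)) :
    Function.Injective (LinearMap.rTensor I i) ∧
      Function.Exact (LinearMap.rTensor I i) (LinearMap.rTensor I p) ∧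
      Function.Surjective (LinearMap.rTensor I p) :=
  tensor_injective_exact_general R I hI M F C i p he hp hhom
end

section
/- Let (R, m, k) be a commutative noetherian local ring and I an injective R-module. Then the Matlis dual Hom_R(I, E(k)) is a flat R-module. -/
/-- `E` is an injective hull of the residue field `k` of the local ring `R`. -/
def IsInjectiveHullOfResidueField (R : Type) [CommRing R] [IsLocalRing R]
    (E : Type) [AddCommGroup E] [Module R E] : Prop :=
  Module.Injective R E ∧
    ∃ ι : IsLocalRing.ResidueField R →ₗ[R] E, Function.Injective ι ∧
      ∀ N : Submodule R E, N ≠ ⊥ → N ⊓ LinearMap.range ι ≠ ⊥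

open TensorProduct LinearMap Function

section Theta

variable {R : Type} [CommRing R] {E I : Type} [AddCommGroup E] [Module R E]
  [AddCommGroup I] [Module R I]

/-- The natural map `N ⊗ Hom(I,E) → Hom(Hom(N,I), E)`. -/
noncomputable def theta (N : Type) [AddCommGroup N] [Module R N] :
    N ⊗[R] (I →ₗ[R] E) →ₗ[R] ((N →ₗ[R] I) →ₗ[R] E) :=
  TensorProduct.lift ((LinearMap.llcomp R (N →ₗ[R] I) I E).flip.comp LinearMap.applyₗ)

@[simp] lemma theta_tmul (N : Type) [AddCommGroup N] [Module R N]
    (n : N) (φ : I →ₗ[R] E) (g : N →ₗ[R] I) :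
    theta (E := E) N (n ⊗ₜ φ) g = φ (g n) := rfl

lemma theta_naturality {N N' : Type} [AddCommGroup N] [Module R N]
    [AddCommGroup N'] [Module R N'] (f : N →ₗ[R] N')
    (t : N ⊗[R] (I →ₗ[R] E)) (g : N' →ₗ[R] I) :
    theta (E := E) N' (LinearMap.rTensor _ f t) g = theta (E := E) N t (g ∘ₗ f) := by
  induction t with
  | zero => simp
  | tmul n φ => simp
  | add a b ha hb => simp [ha, hb]

/-- The map `I →ₗ ((Fin k → R) →ₗ I)`, `u ↦ (v ↦ v i • u)`. -/
noncomputable def cmap {k : ℕ} (i : Fin k) : I →ₗ[R] ((Fin k → R) →ₗ[R] I) :=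
  LinearMap.smulRightₗ (LinearMap.proj i)

@[simp] lemma cmap_apply {k : ℕ} (i : Fin k) (u : I) (v : Fin k → R) :
    cmap (R := R) i u v = v i • u := rfl

lemma theta_left_inv {k : ℕ} (t : (Fin k → R) ⊗[R] (I →ₗ[R] E)) :
    ∑ i, (Pi.single i 1 : Fin k → R) ⊗ₜ[R] ((theta (E := E) (Fin k → R) t) ∘ₗ cmap i) = t := by
  induction t with
  | zero => simp
  | tmul v φ =>
      have h1 : ∀ i : Fin k, (theta (E := E) (Fin k → R) (v ⊗ₜ φ)) ∘ₗ cmap i = v i • φ := by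
        intro i; ext u
        simp only [LinearMap.comp_apply, theta_tmul, cmap_apply, map_smul,
          LinearMap.smul_apply]
      simp_rw [h1, tmul_smul, smul_tmul', ← sum_tmul]
      congr 1
      simp_rw [← Pi.single_smul, smul_eq_mul, mul_one, Finset.univ_sum_single]
  | add a b ha hb =>
      simp only [map_add, LinearMap.add_comp, tmul_add, Finset.sum_add_distrib, ha, hb]

lemma theta_free_injective {k : ℕ} :
    Function.Injective (theta (R := R) (E := E) (I := I) (Fin k → R)) := by
  intro a b hab
  rw [← theta_left_inv a, ← theta_left_inv b, hab]

lemma theta_free_surjective {k : ℕ} :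
    Function.Surjective (theta (R := R) (E := E) (I := I) (Fin k → R)) := by
  intro ψ
  refine ⟨∑ i, (Pi.single i 1 : Fin k → R) ⊗ₜ[R] (ψ ∘ₗ cmap i), ?_⟩
  ext g
  have hg : ∑ i, (LinearMap.proj i : (Fin k → R) →ₗ[R] R).smulRight (g (Pi.single i 1)) = g := by
    refine LinearMap.ext fun v => ?_
    simp only [LinearMap.sum_apply, LinearMap.smulRight_apply,
      LinearMap.proj_apply, ← map_smul, ← map_sum]
    congr 1
    simp_rw [← Pi.single_smul, smul_eq_mul, mul_one, Finset.univ_sum_single]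
  have : ∀ i, theta (E := E) (Fin k → R) ((Pi.single i 1 : Fin k → R) ⊗ₜ[R] (ψ ∘ₗ cmap i)) g
      = ψ ((LinearMap.proj i).smulRight (g (Pi.single i 1))) := fun i => rfl
  rw [map_sum, LinearMap.sum_apply]
  simp_rw [this]
  rw [← map_sum, hg]

end Theta

section Exact

variable {R : Type} [CommRing R]

/-- Factor a linear map through a surjection whose kernel it kills. -/
lemma descend {A B X : Type} [AddCommGroup A] [Module R A] [AddCommGroup B] [Module R B]
    [AddCommGroup X] [Module R X] (p : A →ₗ[R] B) (hp : Function.Surjective p)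
    (g : A →ₗ[R] X) (hker : LinearMap.ker p ≤ LinearMap.ker g) :
    ∃ g' : B →ₗ[R] X, g' ∘ₗ p = g := by
  refine ⟨(Submodule.liftQ (LinearMap.ker p) g hker) ∘ₗ
    (p.quotKerEquivOfSurjective hp).symm.toLinearMap, ?_⟩
  ext a
  have h1 : (p.quotKerEquivOfSurjective hp).symm (p a) = Submodule.Quotient.mk a := by
    rw [LinearEquiv.symm_apply_eq]
    simp [LinearMap.quotKerEquivOfSurjective, LinearMap.quotKerEquivRange,
      LinearEquiv.ofTop]
  simp [h1]

/-- Dualizing an exact sequence into an injective module preserves exactness. -/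
lemma dual_exact {E A B C : Type} [AddCommGroup E] [Module R E]
    [AddCommGroup A] [Module R A] [AddCommGroup B] [Module R B] [AddCommGroup C] [Module R C]
    (hEi : Module.Injective R E) (α : A →ₗ[R] B) (β : B →ₗ[R] C)
    (hker : LinearMap.ker β ≤ LinearMap.range α)
    (ψ : B →ₗ[R] E) (hψ : ψ ∘ₗ α = 0) : ∃ φ : C →ₗ[R] E, φ ∘ₗ β = ψ := by
  have hkerψ : LinearMap.ker β.rangeRestrict ≤ LinearMap.ker ψ := by
    intro b hb
    rw [LinearMap.ker_rangeRestrict] at hb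
    obtain ⟨a, rfl⟩ := hker hb
    have := LinearMap.congr_fun hψ a
    simpa using this
  obtain ⟨ψ', hψ'⟩ := descend β.rangeRestrict (LinearMap.surjective_rangeRestrict β) ψ hkerψ
  obtain ⟨φ, hφ⟩ := hEi.out (LinearMap.range β).subtype (Submodule.injective_subtype _) ψ'
  refine ⟨φ, ?_⟩
  ext b
  have : β b = (LinearMap.range β).subtype (β.rangeRestrict b) := rfl
  rw [LinearMap.comp_apply, this, hφ, ← LinearMap.comp_apply, hψ']

end Exact

section Main

variable {R : Type} [CommRing R] {E I : Type} [AddCommGroup E] [Module R E]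
  [AddCommGroup I] [Module R I]

lemma theta_injective_of_finite [IsNoetherianRing R] (hEi : Module.Injective R E)
    (N : Type) [AddCommGroup N] [Module R N] [Module.Finite R N] :
    Function.Injective (theta (R := R) (E := E) (I := I) N) := by
  obtain ⟨n, p, hp⟩ := Module.Finite.exists_fin' R N
  have hKfin : Module.Finite R (LinearMap.ker p) := by
    rw [Module.Finite.iff_fg]
    exact IsNoetherian.noetherian _
  obtain ⟨m, q, hq⟩ := Module.Finite.exists_fin' R (LinearMap.ker p)
  set B : (Fin m → R) →ₗ[R] (Fin n → R) := (LinearMap.ker p).subtype ∘ₗ q with hB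
  have hrange : LinearMap.range B = LinearMap.ker p := by
    rw [hB, LinearMap.range_comp, LinearMap.range_eq_top.2 hq, Submodule.map_top,
      Submodule.range_subtype]
  have hpB : p ∘ₗ B = 0 := by
    rw [← LinearMap.range_le_ker_iff, hrange]
  -- reduce to kernel
  have key : ∀ t : N ⊗[R] (I →ₗ[R] E), theta (E := E) N t = 0 → t = 0 := by
    intro t ht
    obtain ⟨s, rfl⟩ := LinearMap.rTensor_surjective (I →ₗ[R] E) hp t
    -- ψ := theta s kills the image of Hom(N, I)
    have hψα : (theta (E := E) (Fin n → R) s) ∘ₗ (LinearMap.lcomp R I p) = 0 := by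
      ext g
      have := theta_naturality (E := E) p s g
      simp only [LinearMap.comp_apply, LinearMap.lcomp_apply']
      rw [← this, ht]
    -- exactness of Hom(-, I) at the middle spot
    have hexact : LinearMap.ker (LinearMap.lcomp R I B) ≤
        LinearMap.range (LinearMap.lcomp R I p) := by
      intro g hg
      rw [LinearMap.mem_ker] at hg
      have hgker : LinearMap.ker p ≤ LinearMap.ker g := by
        rw [← hrange]
        rw [LinearMap.range_le_ker_iff]
        exact hg
      obtain ⟨g', hg'⟩ := descend p hp g hgker
      exact ⟨g', hg'⟩
    obtain ⟨φ, hφ⟩ := dual_exact hEi (LinearMap.lcomp R I p) (LinearMap.lcomp R I B)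
      hexact (theta (E := E) (Fin n → R) s) hψα
    obtain ⟨w, hw⟩ := theta_free_surjective (R := R) (E := E) (I := I) (k := m) φ
    have hsw : LinearMap.rTensor (I →ₗ[R] E) B w = s := by
      apply theta_free_injective (R := R) (E := E) (I := I)
      ext h
      rw [theta_naturality (E := E) B w h]
      have := LinearMap.congr_fun hφ h
      simp only [LinearMap.comp_apply, LinearMap.lcomp_apply'] at this
      rw [← hw] at this
      exact this
    rw [← hsw, ← LinearMap.comp_apply, ← LinearMap.rTensor_comp, hpB]
    simp
  intro a b hab
  rw [← sub_eq_zero]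
  exact key _ (by rw [map_sub, hab, sub_self])

end Main

/-- Over a commutative noetherian local ring, the Matlis dual `Hom_R(I, E(k))` of an
injective module `I` is flat. -/
theorem matlisDual_injective_flat (R : Type) [CommRing R] [IsNoetherianRing R] [IsLocalRing R]
    (E : Type) [AddCommGroup E] [Module R E] (hE : IsInjectiveHullOfResidueField R E)
    (I : Type) [AddCommGroup I] [Module R I] (hI : Module.Injective R I) :
    Module.Flat R (I →ₗ[R] E) := by
  obtain ⟨hEi, -⟩ := hE
  rw [Module.Flat.iff_rTensor_injective']
  intro J
  have : Module.Finite R J := by rw [Module.Finite.iff_fg]; exact IsNoetherian.noetherian _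
  have hθJ := theta_injective_of_finite (E := E) (I := I) hEi J
  intro a b hab
  apply hθJ
  ext h
  obtain ⟨g, hg⟩ := hI.out J.subtype (Submodule.injective_subtype _) h
  have hg' : h = g ∘ₗ J.subtype := by
    ext x; rw [LinearMap.comp_apply, hg]
  rw [hg', ← theta_naturality (E := E) J.subtype a g,
    ← theta_naturality (E := E) J.subtype b g, hab]
end

section
/- Let R be a commutative ring, M an R-module admitting a monomorphism α: M → L with L of finite projective dimension, and suppose f: M → F is a preenvelope of M with respect to modules of finite projective dimension. If 0 → A → P → F → 0 is exact with P projective and Ext^1_R(M, A) = 0, then there exists a monomorphism M → P which is a projective preenvelope of M. -/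
open CategoryTheory Opposite

universe u

/-- Finite projective dimension, via finite projective resolutions. -/
inductive FinProjDim (R : Type) [CommRing R] : ModuleCat.{u} R → Prop
  | projective (P : ModuleCat R) (h : Module.Projective R P) : FinProjDim R P
  | step (K P M : ModuleCat.{u} R) (hP : Module.Projective R P)
      (i : K →ₗ[R] P) (p : P →ₗ[R] M)
      (hi : Function.Injective i) (he : Function.Exact i p)
      (hp : Function.Surjective p) (hK : FinProjDim R K) : FinProjDim R M

/-!
`Ext¹(M, A) = 0` makes `Hom(M, P) → Hom(M, F)` surjective, so `f` lifts to `β : M → P` with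
`q ∘ β = f`. Any map from `M` to a projective module factors through the preenvelope `f`, hence
through `β`; factoring the embedding `α` through `f` shows that `f`, and therefore `β`, is
injective.
-/

namespace CategoryTheory

open Limits

variable {R : Type*} [Ring R] {C : Type*} [Category C] [Abelian C] [Linear R C]
  [EnoughProjectives C]

lemma ProjectiveResolution.exists_d_comp_eq_of_isZero_ext_one {X Y : C}
    (Pr : ProjectiveResolution X) (hExt : IsZero (((Ext R C 1).obj (Opposite.op X)).obj Y))
    (v : Pr.complex.X 1 ⟶ Y) (hv : Pr.complex.d 2 1 ≫ v = 0) :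
    ∃ w : Pr.complex.X 0 ⟶ Y, Pr.complex.d 1 0 ≫ w = v := by
  let K := Pr.complex.linearYonedaObj R Y
  have hexact : (K.sc' 0 1 2).Exact := by
    rw [← K.exactAt_iff' 0 1 2 (by simp) (by simp),
      HomologicalComplex.exactAt_iff_isZero_homology]
    exact hExt.of_iso (Pr.isoExt 1 Y).symm
  exact (ShortComplex.moduleCat_exact_iff _).mp hexact v hv

lemma ShortComplex.ShortExact.exists_lift_of_isZero_ext_one {X : C} {S : ShortComplex C}
    (hS : S.ShortExact) (hExt : IsZero (((Ext R C 1).obj (Opposite.op X)).obj S.X₁))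
    (f : X ⟶ S.X₃) :
    ∃ β : X ⟶ S.X₂, β ≫ S.g = f := by
  have := hS.mono_f
  have := hS.epi_g
  obtain ⟨Pr⟩ : Nonempty (ProjectiveResolution X) := HasProjectiveResolution.out
  let π₀ : Pr.complex.X 0 ⟶ X := Pr.π.f 0
  let d₁₀ := Pr.complex.d 1 0
  let u : Pr.complex.X 0 ⟶ S.X₂ := Projective.factorThru (π₀ ≫ f) S.g
  have hu : u ≫ S.g = π₀ ≫ f := Projective.factorThru_comp _ _
  have hdπ : d₁₀ ≫ π₀ = 0 := Pr.complex_d_comp_π_f_zero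
  have hdu : (d₁₀ ≫ u) ≫ S.g = 0 := by
    rw [Category.assoc, hu, ← Category.assoc, hdπ, zero_comp]
  let v := hS.exact.lift (d₁₀ ≫ u) hdu
  have hv : v ≫ S.f = d₁₀ ≫ u := hS.exact.lift_f _ _
  have hdv : Pr.complex.d 2 1 ≫ v = 0 := by
    rw [← cancel_mono S.f, Category.assoc, hv, zero_comp, ← Category.assoc,
      HomologicalComplex.d_comp_d, zero_comp]
  obtain ⟨w, hw⟩ := Pr.exists_d_comp_eq_of_isZero_ext_one hExt v hdv
  -- `u - w ≫ S.f` still lifts `π₀ ≫ f` and kills the image of `d₁₀`, so it descends to `X`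
  have hcomp : d₁₀ ≫ (u - w ≫ S.f) = 0 := by
    rw [Preadditive.comp_sub, ← Category.assoc, hw, hv, sub_self]
  let β : X ⟶ S.X₂ := Pr.exact₀.desc _ hcomp
  have hβ : π₀ ≫ β = u - w ≫ S.f := Pr.exact₀.g_desc _ hcomp
  have : Epi π₀ := inferInstanceAs (Epi (Pr.π.f 0))
  refine ⟨β, ?_⟩
  rw [← cancel_epi π₀, ← Category.assoc, hβ, Preadditive.sub_comp,
    Category.assoc, S.zero, comp_zero, sub_zero, hu]

end CategoryTheory

theorem LinearMap.exists_comp_eq_of_subsingleton_ext_one {R : Type u} [CommRing R]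
    {M A P F : Type u} [AddCommGroup M] [Module R M] [AddCommGroup A] [Module R A]
    [AddCommGroup P] [Module R P] [AddCommGroup F] [Module R F]
    {j : A →ₗ[R] P} {q : P →ₗ[R] F}
    (hj : Function.Injective j) (he : Function.Exact j q) (hq : Function.Surjective q)
    (hExt : Subsingleton (((Ext R (ModuleCat R) 1).obj (op (ModuleCat.of R M))).obj
      (ModuleCat.of R A))) (f : M →ₗ[R] F) :
    ∃ β : M →ₗ[R] P, q ∘ₗ β = f := by
  let S := ModuleCat.shortComplexOfCompEqZero j q he.linearMap_comp_eq_zero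
  have hS : S.ShortExact := ModuleCat.shortComplex_shortExact S he hj hq
  obtain ⟨β, hβ⟩ := hS.exists_lift_of_isZero_ext_one (R := R)
    (ModuleCat.isZero_of_subsingleton _) (ModuleCat.ofHom f)
  exact ⟨β.hom, congrArg ModuleCat.Hom.hom hβ⟩

theorem exists_monic_projective_preenvelope_general (R : Type) [CommRing R]
    (M L F A P : Type) [AddCommGroup M] [Module R M] [AddCommGroup L] [Module R L]
    [AddCommGroup F] [Module R F] [AddCommGroup A] [Module R A] [AddCommGroup P] [Module R P]
    (α : M →ₗ[R] L) (hα : Function.Injective α) (hL : FinProjDim R (ModuleCat.of R L))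
    (f : M →ₗ[R] F)
    (hpre : ∀ (L' : ModuleCat R), FinProjDim R L' →
      ∀ ψ : M →ₗ[R] L', ∃ g : F →ₗ[R] (L' : Type), g.comp f = ψ)
    (j : A →ₗ[R] P) (q : P →ₗ[R] F)
    (hj : Function.Injective j) (he : Function.Exact j q) (hq : Function.Surjective q)
    (hExt : Subsingleton (((Ext R (ModuleCat R) 1).obj (op (ModuleCat.of R M))).obj
      (ModuleCat.of R A))) :
    ∃ β : M →ₗ[R] P, Function.Injective β ∧
      ∀ (Q : Type) [AddCommGroup Q] [Module R Q], Module.Projective R Q →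
        ∀ g : M →ₗ[R] Q, ∃ h : P →ₗ[R] Q, h.comp β = g := by
  obtain ⟨β, hβ⟩ := LinearMap.exists_comp_eq_of_subsingleton_ext_one hj he hq hExt f
  refine ⟨β, ?_, fun Q _ _ hQ g => ?_⟩
  · obtain ⟨g, hg⟩ := hpre _ hL α
    have hα' : (g ∘ₗ q) ∘ₗ β = α := by rw [LinearMap.comp_assoc, hβ, hg]
    exact Function.Injective.of_comp (f := g ∘ₗ q) (by rwa [← LinearMap.coe_comp, hα'])
  · obtain ⟨g', hg'⟩ := hpre (ModuleCat.of R Q) (.projective _ hQ) g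
    exact ⟨g' ∘ₗ q, by rw [LinearMap.comp_assoc, hβ, hg']⟩

/-- If `M` embeds into a module of finite projective dimension, `f : M → F` is a
preenvelope with respect to the class of modules of finite projective dimension,
`0 → A → P → F → 0` is exact with `P` projective and `Ext^1(M, A) = 0`, then there
is a monomorphism `M → P` which is a projective preenvelope of `M`. -/
theorem exists_monic_projective_preenvelope (R : Type) [CommRing R]
    (M L F A P : Type) [AddCommGroup M] [Module R M] [AddCommGroup L] [Module R L]
    [AddCommGroup F] [Module R F] [AddCommGroup A] [Module R A] [AddCommGroup P] [Module R P]
    (α : M →ₗ[R] L) (hα : Function.Injective α) (hL : FinProjDim R (ModuleCat.of R L))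
    (hF : FinProjDim R (ModuleCat.of R F)) (f : M →ₗ[R] F)
    (hpre : ∀ (L' : ModuleCat R), FinProjDim R L' →
      ∀ ψ : M →ₗ[R] L', ∃ g : F →ₗ[R] (L' : Type), g.comp f = ψ)
    (hP : Module.Projective R P)
    (j : A →ₗ[R] P) (q : P →ₗ[R] F)
    (hj : Function.Injective j) (he : Function.Exact j q) (hq : Function.Surjective q)
    (hExt : Subsingleton (((Ext R (ModuleCat R) 1).obj (op (ModuleCat.of R M))).obj
      (ModuleCat.of R A))) :
    ∃ β : M →ₗ[R] P, Function.Injective β ∧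
      ∀ (Q : Type) [AddCommGroup Q] [Module R Q], Module.Projective R Q →
        ∀ g : M →ₗ[R] Q, ∃ h : P →ₗ[R] Q, h.comp β = g :=
  exists_monic_projective_preenvelope_general R M L F A P α hα hL f hpre j q hj he hq hExt
end
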